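/- Complementation reverses the partial orders: let 𝒱 be a polarized arrangement. For all b₁, b₂ ∈ 𝔹, we have b₁ ≤ b₂ in the partial order on 𝔹 if and only if b₂^c ≤ b₁^c in the partial order on 𝔹^∨, the set of bases of the Gale dual 𝒱^∨; that is, under the bijection b ↦ b^c = I∖b, the partial order on 𝔹^∨ is opposite to that on 𝔹. -/

import Mathlib

open Finset

variable {I : Type*} [Fintype I]

/-- The standard dot product on `I → ℝ`. -/
def dot (x y : I → ℝ) : ℝ := ∑ i, x i * y i

/-- The orthogonal complement of a subspace of `I → ℝ` with respect to the standard
inner product. -/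
def perp (V : Submodule ℝ (I → ℝ)) : Submodule ℝ (I → ℝ) where
  carrier := {x | ∀ v ∈ V, dot x v = 0}
  zero_mem' := fun v _ => by simp [dot]
  add_mem' := fun {a b} ha hb v hv => by
    have h : dot (a + b) v = dot a v + dot b v := by
      simp [dot, add_mul, Finset.sum_add_distrib]
    rw [h, ha v hv, hb v hv, add_zero]
  smul_mem' := fun c {a} ha v hv => by
    have h : dot (c • a) v = c * dot a v := by
      simp [dot, Finset.mul_sum, mul_assoc]
    rw [h, ha v hv, mul_zero]

/-- A sign vector: a function `I → ℝ` all of whose values are `+1` or `-1`. -/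
def IsSign (α : I → ℝ) : Prop := ∀ i, α i = 1 ∨ α i = -1

/-- A polarized arrangement `(V, η, ξ)`, where `η ∈ ℝ^I/V` is recorded by an arbitrary
lift `η : I → ℝ` and the covector `ξ ∈ V*` is recorded by an arbitrary vector `ξ : I → ℝ`
with `ξ(v) = ⟨ξ, v⟩` for `v ∈ V`.  Condition (a): every lift of `η` has at least
`|I| - dim V` nonzero coordinates; condition (b): every representative of `ξ` has at
least `dim V` nonzero coordinates. -/
structure PolArr (I : Type*) [Fintype I] where
  V : Submodule ℝ (I → ℝ)
  η : I → ℝ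
  ξ : I → ℝ
  cond_a : ∀ x : I → ℝ, x - η ∈ V →
    Fintype.card I - Module.finrank ℝ V ≤ Set.ncard {i | x i ≠ 0}
  cond_b : ∀ x : I → ℝ, x - ξ ∈ perp V →
    Module.finrank ℝ V ≤ Set.ncard {i | x i ≠ 0}

/-- The chamber `Δ_α ⊆ V_η` determined by a sign vector `α`. -/
def Delta (V : Submodule ℝ (I → ℝ)) (η α : I → ℝ) : Set (I → ℝ) :=
  {x | x - η ∈ V ∧ ∀ i, 0 ≤ α i * x i}

/-- The cone `Σ_α ⊆ V` determined by a sign vector `α`. -/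
def SigCone (V : Submodule ℝ (I → ℝ)) (α : I → ℝ) : Set (I → ℝ) :=
  {x | x ∈ V ∧ ∀ i, 0 ≤ α i * x i}

/-- `α` is feasible if `Δ_α ≠ ∅`. -/
def Feasible (V : Submodule ℝ (I → ℝ)) (η α : I → ℝ) : Prop := (Delta V η α).Nonempty

/-- `α` is bounded if `ξ(Σ_α)` is bounded above. -/
def Bounded (V : Submodule ℝ (I → ℝ)) (ξ α : I → ℝ) : Prop :=
  BddAbove (dot ξ '' SigCone V α)

/-- The flat `H_S = {x ∈ V_η : x_i = 0 for all i ∈ S}`. -/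
def Flat (V : Submodule ℝ (I → ℝ)) (η : I → ℝ) (S : Set I) : Set (I → ℝ) :=
  {x | x - η ∈ V ∧ ∀ i ∈ S, x i = 0}

/-- A basis: a subset `b ⊆ I` with `|b| = dim V` and `H_b ≠ ∅`. -/
def IsBasisSet (V : Submodule ℝ (I → ℝ)) (η : I → ℝ) (b : Finset I) : Prop :=
  b.card = Module.finrank ℝ V ∧ (Flat V η ↑b).Nonempty

/-- `ξ` attains its maximum on `Δ_α` exactly at the point `H_b`. -/
def OptAt (V : Submodule ℝ (I → ℝ)) (η ξ : I → ℝ) (b : Finset I) (α : I → ℝ) : Prop :=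
  ∃ p ∈ Flat V η ↑b, p ∈ Delta V η α ∧ ∀ x ∈ Delta V η α, x ≠ p → dot ξ (x - p) < 0

/-- `α = μ(b)`: the bounded feasible sign vector on whose chamber `ξ` is maximized
exactly at `H_b`. -/
def MuSpec (V : Submodule ℝ (I → ℝ)) (η ξ : I → ℝ) (b : Finset I) (α : I → ℝ) : Prop :=
  Feasible V η α ∧ Bounded V ξ α ∧ OptAt V η ξ b α

/-- The coordinate subspace of vectors vanishing on `S`. -/
def zeroOn (S : Set I) : Submodule ℝ (I → ℝ) where
  carrier := {x | ∀ i ∈ S, x i = 0}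
  zero_mem' := fun i _ => rfl
  add_mem' := fun {a b} ha hb i hi => by simp [Pi.add_apply, ha i hi, hb i hi]
  smul_mem' := fun c {a} ha i hi => by simp [Pi.smul_apply, ha i hi]

/-- The generating relation `b₁ ≺ b₂` of the partial order on bases:
`|b₁ ∩ b₂| = dim V - 1` and `ξ(H_{b₁} - H_{b₂}) < 0`. -/
def Prec [DecidableEq I] (V : Submodule ℝ (I → ℝ)) (η ξ : I → ℝ) (b₁ b₂ : Finset I) : Prop :=
  IsBasisSet V η b₁ ∧ IsBasisSet V η b₂ ∧ (b₁ ∩ b₂).card = Module.finrank ℝ V - 1 ∧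
    ∃ p₁ ∈ Flat V η ↑b₁, ∃ p₂ ∈ Flat V η ↑b₂, dot ξ (p₁ - p₂) < 0

/-- The partial order on bases: the reflexive-transitive closure of `≺`. -/
def OrderLE [DecidableEq I] (V : Submodule ℝ (I → ℝ)) (η ξ : I → ℝ) :
    Finset I → Finset I → Prop :=
  Relation.ReflTransGen (Prec V η ξ)

def E (V : Submodule ℝ (I → ℝ)) : Submodule ℝ (EuclideanSpace ℝ I) :=
  V.comap (WithLp.linearEquiv 2 ℝ (I → ℝ)).toLinearMap

lemma dot_eq_inner (x y : EuclideanSpace ℝ I) : dot x y = (inner ℝ x y : ℝ) := by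
  simp [dot, PiLp.inner_apply, RCLike.inner_apply, mul_comm]

lemma mem_E {V : Submodule ℝ (I → ℝ)} {x : EuclideanSpace ℝ I} : x ∈ E V ↔ WithLp.ofLp x ∈ V := Iff.rfl

lemma perp_eq (V : Submodule ℝ (I → ℝ)) : E (perp V) = (E V)ᗮ := by
  ext x
  rw [Submodule.mem_orthogonal, mem_E]
  constructor
  · intro hx v hv
    rw [real_inner_comm, ← dot_eq_inner]
    exact hx v hv
  · intro hx v hv
    have := hx (WithLp.toLp 2 v) hv
    rw [real_inner_comm, ← dot_eq_inner] at this
    exact this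

lemma finrank_E (V : Submodule ℝ (I → ℝ)) : Module.finrank ℝ (E V) = Module.finrank ℝ V := by
  rw [E, Submodule.comap_equiv_eq_map_symm]
  exact LinearEquiv.finrank_map_eq _ _

lemma finrank_perp (V : Submodule ℝ (I → ℝ)) :
    Module.finrank ℝ (perp V) = Fintype.card I - Module.finrank ℝ V := by
  have h := Submodule.finrank_add_finrank_orthogonal (K := E V)
  rw [← perp_eq, finrank_E, finrank_E, finrank_euclideanSpace] at h
  omega

lemma perp_perp (V : Submodule ℝ (I → ℝ)) : perp (perp V) = V := by
  have h : E (perp (perp V)) = E V := by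
    rw [perp_eq, perp_eq, Submodule.orthogonal_orthogonal]
  exact SetLike.ext fun x => SetLike.ext_iff.mp h (WithLp.toLp 2 x)

lemma finrank_le_card (V : Submodule ℝ (I → ℝ)) :
    Module.finrank ℝ V ≤ Fintype.card I := by
  have := Submodule.finrank_le (E V)
  rwa [finrank_E, finrank_euclideanSpace] at this

lemma dot_comm (x y : I → ℝ) : dot x y = dot y x := by simp [dot, mul_comm]

lemma dot_sub_right (x a b : I → ℝ) : dot x (a - b) = dot x a - dot x b := by
  simp [dot, mul_sub, Finset.sum_sub_distrib]

lemma dot_neg_left (x y : I → ℝ) : dot (-x) y = -dot x y := by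
  simp [dot, Finset.sum_neg_distrib]

lemma finrank_zeroOn (S : Finset I) :
    Module.finrank ℝ (zeroOn (↑S : Set I)) = Fintype.card I - S.card := by
  classical
  set f : (I → ℝ) →ₗ[ℝ] ((↥S : Type _) → ℝ) := LinearMap.funLeft ℝ ℝ (Subtype.val)
  have hker : LinearMap.ker f = zeroOn (↑S : Set I) := by
    ext x
    simp only [LinearMap.mem_ker]
    constructor
    · intro hx i hi
      exact congrFun hx ⟨i, hi⟩
    · intro hx
      funext i
      exact hx i i.2
  have hsurj : Function.Surjective f :=
    LinearMap.funLeft_surjective_of_injective ℝ ℝ _ Subtype.val_injective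
  have h := LinearMap.finrank_range_add_finrank_ker f
  rw [hker, LinearMap.range_eq_top.mpr hsurj] at h
  simp only [finrank_top, Module.finrank_fintype_fun_eq_card, Fintype.card_coe] at h
  omega

lemma zeroOn_inf_eq_bot_aux {W : Submodule ℝ (I → ℝ)} {S : Finset I}
    (hdisj : W ⊓ zeroOn (↑S : Set I) = ⊥)
    (hsum : Module.finrank ℝ W + (Fintype.card I - S.card) = Fintype.card I) :
    W ⊔ zeroOn (↑S : Set I) = ⊤ := by
  have h := Submodule.finrank_sup_add_finrank_inf_eq W (zeroOn (↑S : Set I))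
  rw [hdisj, finrank_zeroOn] at h
  simp only [finrank_bot, add_zero] at h
  apply Submodule.eq_top_of_finrank_eq
  rw [Module.finrank_fintype_fun_eq_card]
  omega

lemma dot_self_eq_zero {x : EuclideanSpace ℝ I} (h : dot x x = 0) : x = 0 := by
  have h2 : (inner ℝ x x : ℝ) = 0 := by rw [← dot_eq_inner]; exact h
  exact inner_self_eq_zero.mp h2

lemma perp_inf_eq_bot {U W : Submodule ℝ (I → ℝ)} (h : U ⊔ W = ⊤) :
    perp U ⊓ perp W = ⊥ := by
  rw [Submodule.eq_bot_iff]
  rintro x ⟨hu, hw⟩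
  have hx : ∀ v : I → ℝ, dot x v = 0 := by
    intro v
    have hv : v ∈ U ⊔ W := by rw [h]; trivial
    obtain ⟨a, ha, b, hb, rfl⟩ := Submodule.mem_sup.mp hv
    have : dot x (a + b) = dot x a + dot x b := by
      simp [dot, mul_add, Finset.sum_add_distrib]
    rw [this, hu a ha, hw b hb, add_zero]
  simpa using dot_self_eq_zero (hx x)

lemma perp_zeroOn (S : Finset I) [DecidableEq I] :
    perp (zeroOn (↑S : Set I)) = zeroOn (↑(Sᶜ) : Set I) := by
  ext x
  constructor
  · intro hx i hi
    rw [Finset.coe_compl, Set.mem_compl_iff, Finset.mem_coe] at hi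
    have hmem : (Pi.single i 1 : I → ℝ) ∈ zeroOn (↑S : Set I) := by
      intro j hj
      exact Pi.single_eq_of_ne (by rintro rfl; exact hi hj) 1
    have := hx _ hmem
    simpa [dot, Pi.single_apply, mul_ite] using this
  · intro hx v hv
    apply Finset.sum_eq_zero
    intro i _
    by_cases hi : i ∈ S
    · rw [hv i hi, mul_zero]
    · rw [hx i (by simpa using hi), zero_mul]

lemma indep_of_basis (W : Submodule ℝ (I → ℝ)) (θ : I → ℝ)
    (hgen : ∀ x : I → ℝ, x - θ ∈ W →
      Fintype.card I - Module.finrank ℝ W ≤ Set.ncard {i | x i ≠ 0})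
    (S : Finset I) (hc : S.card = Module.finrank ℝ W)
    (hne : (Flat W θ ↑S).Nonempty) :
    W ⊓ zeroOn (↑S : Set I) = ⊥ := by
  classical
  obtain ⟨x, hxW, hxS⟩ := hne
  rw [Submodule.eq_bot_iff]
  rintro v ⟨hvW, hvS⟩
  by_contra hv0
  obtain ⟨j, hvj⟩ : ∃ j, v j ≠ 0 := by
    by_contra h
    push_neg at h
    exact hv0 (funext h)
  have hjS : j ∉ S := fun hj => hvj (hvS j hj)
  set y : I → ℝ := x - (x j / v j) • v with hy
  have hyW : y - θ ∈ W := by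
    have : y - θ = (x - θ) - (x j / v j) • v := by
      rw [hy]; abel
    rw [this]
    exact Submodule.sub_mem W hxW (Submodule.smul_mem W _ hvW)
  have hyzero : ∀ i ∈ insert j S, y i = 0 := by
    intro i hi
    rcases Finset.mem_insert.mp hi with rfl | hi
    · simp only [hy, Pi.sub_apply, Pi.smul_apply, smul_eq_mul]
      field_simp
      simp
    · simp only [hy, Pi.sub_apply, Pi.smul_apply, smul_eq_mul, hxS i hi, hvS i hi,
        mul_zero, sub_zero]
  have hsub : {i | y i ≠ 0} ⊆ ↑((insert j S)ᶜ) := by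
    intro i hi
    simp only [Finset.coe_compl, Set.mem_compl_iff, Finset.mem_coe]
    exact fun h => hi (hyzero i h)
  have hcard : Set.ncard {i | y i ≠ 0} ≤ Fintype.card I - (S.card + 1) := by
    have h1 : Set.ncard {i | y i ≠ 0} ≤ ((insert j S)ᶜ).card := by
      rw [← Set.ncard_coe_finset]
      exact Set.ncard_le_ncard hsub (Set.toFinite _)
    rw [Finset.card_compl, Finset.card_insert_of_notMem hjS] at h1
    exact h1
  have hge := hgen y hyW
  have hle : S.card + 1 ≤ Fintype.card I := by
    have := Finset.card_le_card (Finset.subset_univ (insert j S))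
    rwa [Finset.card_insert_of_notMem hjS, Finset.card_univ] at this
  omega

lemma dual_basis [DecidableEq I] (W : Submodule ℝ (I → ℝ)) (θ : I → ℝ)
    (hgen : ∀ x : I → ℝ, x - θ ∈ W →
      Fintype.card I - Module.finrank ℝ W ≤ Set.ncard {i | x i ≠ 0})
    (S : Finset I) (hb : IsBasisSet W θ S) (θ' : I → ℝ) :
    IsBasisSet (perp W) θ' Sᶜ := by
  obtain ⟨hc, hne⟩ := hb
  have hWle := finrank_le_card W
  have hinf : W ⊓ zeroOn (↑S : Set I) = ⊥ := indep_of_basis W θ hgen S hc hne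
  have hsup : W ⊔ zeroOn (↑S : Set I) = ⊤ :=
    zeroOn_inf_eq_bot_aux hinf (by omega)
  have hinf' : perp W ⊓ zeroOn (↑(Sᶜ) : Set I) = ⊥ := by
    rw [← perp_zeroOn]
    exact perp_inf_eq_bot hsup
  have hsup' : perp W ⊔ zeroOn (↑(Sᶜ) : Set I) = ⊤ := by
    apply zeroOn_inf_eq_bot_aux hinf'
    rw [finrank_perp, Finset.card_compl, hc]
    omega
  constructor
  · rw [Finset.card_compl, hc, finrank_perp]
  · have : θ' ∈ perp W ⊔ zeroOn (↑(Sᶜ) : Set I) := by rw [hsup']; trivial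
    obtain ⟨w, hw, z, hz, hwz⟩ := Submodule.mem_sup.mp this
    refine ⟨z, ?_, hz⟩
    have : z - θ' = -w := by rw [← hwz]; abel
    rw [this]
    exact Submodule.neg_mem _ hw

lemma key_identity (V : Submodule ℝ (I → ℝ)) (η ξ : I → ℝ) (b : Finset I) [DecidableEq I]
    (p q : I → ℝ) (hp : p ∈ Flat V η ↑b) (hq : q ∈ Flat (perp V) (-ξ) ↑(bᶜ)) :
    dot ξ p = dot η q + dot ξ η := by
  obtain ⟨hpV, hpz⟩ := hp
  obtain ⟨hqV, hqz⟩ := hq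
  have hqV' : q + ξ ∈ perp V := by
    have : q - -ξ = q + ξ := by abel
    rwa [this] at hqV
  have h0 : dot (q + ξ) (p - η) = 0 := hqV' _ hpV
  have hqp : dot q p = 0 := by
    apply Finset.sum_eq_zero
    intro i _
    by_cases hi : i ∈ b
    · rw [hpz i hi, mul_zero]
    · rw [hqz i (by simpa using hi), zero_mul]
  have hexp : dot (q + ξ) (p - η) = dot q p + dot ξ p - (dot q η + dot ξ η) := by
    simp only [dot, Pi.add_apply, Pi.sub_apply]
    rw [← Finset.sum_add_distrib, ← Finset.sum_add_distrib, ← Finset.sum_sub_distrib]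
    exact Finset.sum_congr rfl fun i _ => by ring
  rw [hexp, hqp, zero_add] at h0
  rw [dot_comm η q]
  linarith


lemma hgen_dual (A : PolArr I) : ∀ x : I → ℝ, x - (-A.ξ) ∈ perp A.V →
    Fintype.card I - Module.finrank ℝ (perp A.V) ≤ Set.ncard {i | x i ≠ 0} := by
  intro x hx
  have h1 : (-x) - A.ξ ∈ perp A.V := by
    have h : (-x) - A.ξ = -(x - (-A.ξ)) := by abel
    rw [h]; exact Submodule.neg_mem _ hx
  have h2 := A.cond_b (-x) h1
  have h3 : {i | (-x) i ≠ 0} = {i | x i ≠ 0} := by ext i; simp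
  rw [h3] at h2
  rw [finrank_perp]
  have := finrank_le_card A.V
  omega

lemma dot_zero_right (x : I → ℝ) : dot x 0 = 0 := by simp [dot]

lemma prec_iff [DecidableEq I] (A : PolArr I) (a b : Finset I) :
    Prec A.V A.η A.ξ a b ↔ Prec (perp A.V) (-A.ξ) (-A.η) bᶜ aᶜ := by
  constructor
  · rintro ⟨ha, hb, hcard, p₁, hp₁, p₂, hp₂, hlt⟩
    have ha' := dual_basis A.V A.η A.cond_a a ha (-A.ξ)
    have hb' := dual_basis A.V A.η A.cond_a b hb (-A.ξ)
    obtain ⟨q₁, hq₁⟩ := ha'.2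
    obtain ⟨q₂, hq₂⟩ := hb'.2
    have hd1 : 1 ≤ Module.finrank ℝ A.V := by
      rcases Nat.eq_zero_or_pos (Module.finrank ℝ A.V) with h0 | h; swap
      · exact h
      exfalso
      have hV : A.V = ⊥ := Submodule.finrank_eq_zero.mp h0
      have e₁ : p₁ = A.η := by
        have := hp₁.1; rw [hV, Submodule.mem_bot, sub_eq_zero] at this; exact this
      have e₂ : p₂ = A.η := by
        have := hp₂.1; rw [hV, Submodule.mem_bot, sub_eq_zero] at this; exact this
      rw [e₁, e₂, sub_self, dot_zero_right] at hlt
      exact lt_irrefl 0 hlt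
    refine ⟨hb', ha', ?_, q₂, hq₂, q₁, hq₁, ?_⟩
    · have h1 : bᶜ ∩ aᶜ = (a ∪ b)ᶜ := by rw [Finset.compl_union, Finset.inter_comm]
      have h2 := Finset.card_union_add_card_inter a b
      have h3 : (a ∪ b).card ≤ Fintype.card I := Finset.card_le_univ _
      have h4 := finrank_le_card A.V
      have h5 := ha.1
      have h6 := hb.1
      rw [h1, Finset.card_compl, finrank_perp]
      omega
    · have k₁ := key_identity A.V A.η A.ξ a p₁ q₁ hp₁ hq₁
      have k₂ := key_identity A.V A.η A.ξ b p₂ q₂ hp₂ hq₂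
      rw [dot_sub_right] at hlt
      rw [dot_neg_left, dot_sub_right]
      linarith
  · rintro ⟨hb', ha', hcard', q₂, hq₂, q₁, hq₁, hlt'⟩
    have hgen' := hgen_dual A
    have hb : IsBasisSet A.V A.η b := by
      have := dual_basis (perp A.V) (-A.ξ) hgen' bᶜ hb' A.η
      rwa [perp_perp, compl_compl] at this
    have ha : IsBasisSet A.V A.η a := by
      have := dual_basis (perp A.V) (-A.ξ) hgen' aᶜ ha' A.η
      rwa [perp_perp, compl_compl] at this
    obtain ⟨p₁, hp₁⟩ := ha.2
    obtain ⟨p₂, hp₂⟩ := hb.2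
    have hd1 : 1 ≤ Module.finrank ℝ (perp A.V) := by
      rcases Nat.eq_zero_or_pos (Module.finrank ℝ (perp A.V)) with h0 | h; swap
      · exact h
      exfalso
      have hV : perp A.V = ⊥ := Submodule.finrank_eq_zero.mp h0
      have e₂ : q₂ = -A.ξ := by
        have := hq₂.1; rw [hV, Submodule.mem_bot, sub_eq_zero] at this; exact this
      have e₁ : q₁ = -A.ξ := by
        have := hq₁.1; rw [hV, Submodule.mem_bot, sub_eq_zero] at this; exact this
      rw [e₁, e₂, sub_self, dot_zero_right] at hlt'
      exact lt_irrefl 0 hlt'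
    refine ⟨ha, hb, ?_, p₁, hp₁, p₂, hp₂, ?_⟩
    · have h1 : (a ∩ b)ᶜ = bᶜ ∪ aᶜ := by rw [Finset.compl_inter, Finset.union_comm]
      have h2 := Finset.card_union_add_card_inter bᶜ aᶜ
      have h3 : (bᶜ ∪ aᶜ).card ≤ Fintype.card I := Finset.card_le_univ _
      have h4 := finrank_le_card A.V
      have h5 : ((a ∩ b)ᶜ).card = Fintype.card I - (a ∩ b).card := Finset.card_compl _
      have h6 : (a ∩ b).card ≤ Fintype.card I := Finset.card_le_univ _
      have h7 := finrank_perp A.V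
      rw [h1] at h5
      rw [ha'.1, hb'.1] at h2
      omega
    · have k₁ := key_identity A.V A.η A.ξ a p₁ q₁ hp₁ hq₁
      have k₂ := key_identity A.V A.η A.ξ b p₂ q₂ hp₂ hq₂
      rw [dot_neg_left, dot_sub_right] at hlt'
      rw [dot_sub_right]
      linarith

/-- **Complementation reverses the partial orders.**  For bases `b₁, b₂` of `𝒱`,
`b₁ ≤ b₂` in the partial order on `𝔹` if and only if `b₂ᶜ ≤ b₁ᶜ` in the partial order
on the set of bases of the Gale dual `𝒱^∨ = (V^⊥, -ξ, -η)`. -/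
theorem order_reversal [DecidableEq I] (A : PolArr I) (b₁ b₂ : Finset I)
    (h₁ : IsBasisSet A.V A.η b₁) (h₂ : IsBasisSet A.V A.η b₂) :
    OrderLE A.V A.η A.ξ b₁ b₂ ↔ OrderLE (perp A.V) (-A.ξ) (-A.η) b₂ᶜ b₁ᶜ := by
  constructor
  · intro h
    have h2 := Relation.ReflTransGen.lift (r := Prec A.V A.η A.ξ)
      (p := Function.swap (Prec (perp A.V) (-A.ξ) (-A.η))) compl
      (fun a b hab => (prec_iff A a b).mp hab) _ _ h
    exact Relation.reflTransGen_swap.mp h2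
  · intro h
    have h2 := Relation.ReflTransGen.lift (r := Prec (perp A.V) (-A.ξ) (-A.η))
      (p := Function.swap (Prec A.V A.η A.ξ)) compl
      (fun c d hcd => (prec_iff A dᶜ cᶜ).mpr (by rwa [compl_compl, compl_compl])) _ _ h
    have h3 := Relation.reflTransGen_swap.mp h2
    simpa [compl_compl, OrderLE] using h3
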